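/- For all S5 S10 : Finset ℤ and every x ∈ ofFinset S5 S10: x ∈ V(S5, S10) if and only if x allows the top Yukawa, x is not pheno-constrained, and x is complete. Equivalently, V(S5, S10) coincides with the set of elements of ofFinset S5 S10 satisfying all three conditions. -/
import Mathlib


/-- A charge spectrum for the `SU(5)` model: optional Higgs charges and
finite sets of distinct matter charges. -/
structure ChargeSpectrum where
  qHd : Option ℤ
  qHu : Option ℤ
  Q5 : Finset ℤ
  Q10 : Finset ℤ
deriving DecidableEq

namespace ChargeSpectrum

instance : HasSubset ChargeSpectrum where
  Subset x y :=
    x.qHd.toFinset ⊆ y.qHd.toFinset ∧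
    x.qHu.toFinset ⊆ y.qHu.toFinset ∧
    x.Q5 ⊆ y.Q5 ∧ x.Q10 ⊆ y.Q10

/-- `x` allows the top Yukawa coupling `10 10 5_Hu`. -/
def AllowsTopYukawa (x : ChargeSpectrum) : Prop :=
  ∃ q : ℤ, x.qHu = some q ∧ ∃ q1 ∈ x.Q10, ∃ q2 ∈ x.Q10, q1 + q2 = q

/-- `x` is complete: both Higgs sectors present, both matter sectors nonempty. -/
def IsComplete (x : ChargeSpectrum) : Prop :=
  x.qHd.isSome ∧ x.qHu.isSome ∧ x.Q5 ≠ ∅ ∧ x.Q10 ≠ ∅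

/-- `x` allows at least one of the dangerous operators μ, β, Λ, W1, W2, W4, K1, K2. -/
def IsPhenoConstrained (x : ChargeSpectrum) : Prop :=
  (∃ a : ℤ, x.qHd = some a ∧ x.qHu = some a) ∨
  (∃ b : ℤ, x.qHu = some b ∧ b ∈ x.Q5) ∨
  (∃ q5 ∈ x.Q5, ∃ q5' ∈ x.Q5, ∃ q10 ∈ x.Q10, q5 + q5' + q10 = 0) ∨
  (∃ q10 ∈ x.Q10, ∃ q10' ∈ x.Q10, ∃ q10'' ∈ x.Q10, ∃ q5 ∈ x.Q5,
    q10 + q10' + q10'' + q5 = 0) ∨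
  (∃ a : ℤ, x.qHd = some a ∧ ∃ q10 ∈ x.Q10, ∃ q10' ∈ x.Q10, ∃ q10'' ∈ x.Q10,
    q10 + q10' + q10'' + a = 0) ∨
  (∃ a : ℤ, x.qHd = some a ∧ ∃ b : ℤ, x.qHu = some b ∧ ∃ q5 ∈ x.Q5,
    q5 + a - 2 * b = 0) ∨
  (∃ q10 ∈ x.Q10, ∃ q10' ∈ x.Q10, ∃ q5 ∈ x.Q5, q10 + q10' - q5 = 0) ∨
  (∃ a : ℤ, x.qHd = some a ∧ ∃ b : ℤ, x.qHu = some b ∧ ∃ q10 ∈ x.Q10,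
    a + b + q10 = 0)

/-- `w` minimally allows the top Yukawa: it allows it, but no proper
sub-spectrum does. -/
def MinimallyAllowsTopYukawa (w : ChargeSpectrum) : Prop :=
  AllowsTopYukawa w ∧ ∀ y : ChargeSpectrum, y ⊆ w → y ≠ w → ¬ AllowsTopYukawa y

/-- The bounded class of charge spectra built from the finite charge menus
`S5` and `S10`. -/
def ofFinset (S5 S10 : Finset ℤ) : Finset ChargeSpectrum :=
  ((({none} ∪ S5.image Option.some) ×ˢ ({none} ∪ S5.image Option.some)) ×ˢ
      (S5.powerset ×ˢ S10.powerset)).image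
    fun p => ⟨p.1.1, p.1.2, p.2.1, p.2.2⟩

/-- Insert a charge into the `Q5` sector. -/
def insertQ5 (x : ChargeSpectrum) (q : ℤ) : ChargeSpectrum :=
  ⟨x.qHd, x.qHu, insert q x.Q5, x.Q10⟩

/-- Insert a charge into the `Q10` sector. -/
def insertQ10 (x : ChargeSpectrum) (q : ℤ) : ChargeSpectrum :=
  ⟨x.qHd, x.qHu, x.Q5, insert q x.Q10⟩

/-- `MemV S5 S10 x` says that `x` lies in the least class `V(S5, S10)` generated
from seeds (completions of minimal top-Yukawa witnesses that are not
pheno-constrained) by the `Q5`- and `Q10`-closure moves. -/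
inductive MemV (S5 S10 : Finset ℤ) : ChargeSpectrum → Prop
  | seed (w : ChargeSpectrum) (hw : w ∈ ofFinset S5 S10)
      (hmin : MinimallyAllowsTopYukawa w) (a b : ℤ) (ha : a ∈ S5) (hb : b ∈ S5)
      (hc : ¬ IsPhenoConstrained ⟨some a, w.qHu, {b}, w.Q10⟩) :
      MemV S5 S10 ⟨some a, w.qHu, {b}, w.Q10⟩
  | q5Closure (x : ChargeSpectrum) (hx : MemV S5 S10 x) (q : ℤ) (hq : q ∈ S5)
      (h : ¬ IsPhenoConstrained (insertQ5 x q)) : MemV S5 S10 (insertQ5 x q)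
  | q10Closure (x : ChargeSpectrum) (hx : MemV S5 S10 x) (q : ℤ) (hq : q ∈ S10)
      (h : ¬ IsPhenoConstrained (insertQ10 x q)) : MemV S5 S10 (insertQ10 x q)

end ChargeSpectrum


namespace ChargeSpectrum

lemma ext' {x y : ChargeSpectrum} (h1 : x.qHd = y.qHd) (h2 : x.qHu = y.qHu)
    (h3 : x.Q5 = y.Q5) (h4 : x.Q10 = y.Q10) : x = y := by
  cases x; cases y; simp_all

lemma pheno_mono {x y : ChargeSpectrum} (h : x ⊆ y)
    (hp : IsPhenoConstrained x) : IsPhenoConstrained y := by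
  obtain ⟨h1, h2, h3, h4⟩ := h
  have hd : ∀ a : ℤ, x.qHd = some a → y.qHd = some a := by
    intro a ha
    have := h1 (show a ∈ x.qHd.toFinset by simp [ha])
    simpa using this
  have hu : ∀ a : ℤ, x.qHu = some a → y.qHu = some a := by
    intro a ha
    have := h2 (show a ∈ x.qHu.toFinset by simp [ha])
    simpa using this
  unfold IsPhenoConstrained at hp ⊢
  rcases hp with ⟨a,ha,hb⟩|⟨b,hb,hm⟩|⟨a,ha,b,hb,c,hc,e⟩|⟨a,ha,b,hb,c,hc,d,hdm,e⟩|
    ⟨a,ha,b,hb,c,hc,d,hdm,e⟩|⟨a,ha,b,hb,c,hc,e⟩|⟨a,ha,b,hb,c,hc,e⟩|⟨a,ha,b,hb,c,hc,e⟩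
  · exact Or.inl ⟨a, hd a ha, hu a hb⟩
  · exact Or.inr (Or.inl ⟨b, hu b hb, h3 hm⟩)
  · exact Or.inr (Or.inr (Or.inl ⟨a, h3 ha, b, h3 hb, c, h4 hc, e⟩))
  · exact Or.inr (Or.inr (Or.inr (Or.inl ⟨a, h4 ha, b, h4 hb, c, h4 hc, d, h3 hdm, e⟩)))
  · exact Or.inr (Or.inr (Or.inr (Or.inr (Or.inl
      ⟨a, hd a ha, b, h4 hb, c, h4 hc, d, h4 hdm, e⟩))))
  · exact Or.inr (Or.inr (Or.inr (Or.inr (Or.inr (Or.inl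
      ⟨a, hd a ha, b, hu b hb, c, h3 hc, e⟩)))))
  · exact Or.inr (Or.inr (Or.inr (Or.inr (Or.inr (Or.inr (Or.inl
      ⟨a, h4 ha, b, h4 hb, c, h3 hc, e⟩))))))
  · exact Or.inr (Or.inr (Or.inr (Or.inr (Or.inr (Or.inr (Or.inr
      ⟨a, hd a ha, b, hu b hb, c, h4 hc, e⟩))))))

lemma mem_ofFinset {S5 S10 : Finset ℤ} {x : ChargeSpectrum} :
    x ∈ ofFinset S5 S10 ↔
      (∀ a : ℤ, x.qHd = some a → a ∈ S5) ∧ (∀ a : ℤ, x.qHu = some a → a ∈ S5) ∧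
      x.Q5 ⊆ S5 ∧ x.Q10 ⊆ S10 := by
  obtain ⟨hd, hu, A, B⟩ := x
  simp only [ofFinset, Finset.mem_image, Finset.mem_product, Finset.mem_union,
    Finset.mem_singleton, Finset.mem_powerset, Prod.exists]
  constructor
  · rintro ⟨a, b, c, d, ⟨⟨h1, h2⟩, h3, h4⟩, heq⟩
    cases heq
    refine ⟨?_, ?_, h3, h4⟩
    · intro q hq
      rcases h1 with h | h
      · simp [h] at hq
      · obtain ⟨a', ha', h⟩ := h
        rw [hq] at h
        simpa [← Option.some_inj.mp h] using ha'
    · intro q hq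
      rcases h2 with h | h
      · simp [h] at hq
      · obtain ⟨a', ha', h⟩ := h
        rw [hq] at h
        simpa [← Option.some_inj.mp h] using ha'
  · rintro ⟨hd1, hu1, h3, h4⟩
    refine ⟨hd, hu, A, B, ⟨⟨?_, ?_⟩, h3, h4⟩, rfl⟩
    · cases hd with
      | none => exact Or.inl rfl
      | some a => exact Or.inr ⟨a, hd1 a rfl, rfl⟩
    · cases hu with
      | none => exact Or.inl rfl
      | some a => exact Or.inr ⟨a, hu1 a rfl, rfl⟩

lemma grow5 {S5 S10 : Finset ℤ} {hd hu : Option ℤ} {A B : Finset ℤ}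
    (hm : MemV S5 S10 ⟨hd, hu, A, B⟩) :
    ∀ D : Finset ℤ, D ⊆ S5 → ¬ IsPhenoConstrained ⟨hd, hu, A ∪ D, B⟩ →
      MemV S5 S10 ⟨hd, hu, A ∪ D, B⟩ := by
  intro D
  induction D using Finset.induction_on with
  | empty => intro _ hp; simpa using hm
  | @insert q D hq ih =>
    intro hD hp
    have heq : A ∪ insert q D = insert q (A ∪ D) := Finset.union_insert q A D
    have hsub : (⟨hd, hu, A ∪ D, B⟩ : ChargeSpectrum) ⊆ ⟨hd, hu, A ∪ insert q D, B⟩ :=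
      ⟨Finset.Subset.refl _, Finset.Subset.refl _,
        by rw [heq]; exact Finset.subset_insert _ _, Finset.Subset.refl _⟩
    have hmem : MemV S5 S10 ⟨hd, hu, A ∪ D, B⟩ :=
      ih (fun z hz => hD (Finset.mem_insert_of_mem hz))
        (fun hc => hp (pheno_mono hsub hc))
    have := MemV.q5Closure _ hmem q (hD (Finset.mem_insert_self _ _))
      (by show ¬ IsPhenoConstrained ⟨hd, hu, insert q (A ∪ D), B⟩; rw [← heq]; exact hp)
    rw [heq]
    exact this

lemma grow10 {S5 S10 : Finset ℤ} {hd hu : Option ℤ} {A B : Finset ℤ}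
    (hm : MemV S5 S10 ⟨hd, hu, A, B⟩) :
    ∀ D : Finset ℤ, D ⊆ S10 → ¬ IsPhenoConstrained ⟨hd, hu, A, B ∪ D⟩ →
      MemV S5 S10 ⟨hd, hu, A, B ∪ D⟩ := by
  intro D
  induction D using Finset.induction_on with
  | empty => intro _ hp; simpa using hm
  | @insert q D hq ih =>
    intro hD hp
    have heq : B ∪ insert q D = insert q (B ∪ D) := Finset.union_insert q B D
    have hsub : (⟨hd, hu, A, B ∪ D⟩ : ChargeSpectrum) ⊆ ⟨hd, hu, A, B ∪ insert q D⟩ :=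
      ⟨Finset.Subset.refl _, Finset.Subset.refl _, Finset.Subset.refl _,
        by rw [heq]; exact Finset.subset_insert _ _⟩
    have hmem : MemV S5 S10 ⟨hd, hu, A, B ∪ D⟩ :=
      ih (fun z hz => hD (Finset.mem_insert_of_mem hz))
        (fun hc => hp (pheno_mono hsub hc))
    have := MemV.q10Closure _ hmem q (hD (Finset.mem_insert_self _ _))
      (by show ¬ IsPhenoConstrained ⟨hd, hu, A, insert q (B ∪ D)⟩; rw [← heq]; exact hp)
    rw [heq]
    exact this

lemma memV_forward {S5 S10 : Finset ℤ} {x : ChargeSpectrum} (h : MemV S5 S10 x) :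
    AllowsTopYukawa x ∧ ¬ IsPhenoConstrained x ∧ IsComplete x := by
  induction h with
  | seed w hw hmin a b ha hb hc =>
    obtain ⟨q, hq, q1, hq1, q2, hq2, hsum⟩ := hmin.1
    refine ⟨⟨q, hq, q1, hq1, q2, hq2, hsum⟩, hc, ?_⟩
    refine ⟨rfl, by rw [hq]; rfl, by simp, ?_⟩
    intro hcon
    rw [show (⟨some a, w.qHu, {b}, w.Q10⟩ : ChargeSpectrum).Q10 = w.Q10 from rfl,
      hcon] at hq1
    exact absurd hq1 (Finset.notMem_empty _)
  | q5Closure x hx q hq h ih =>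
    obtain ⟨⟨p, hp, p1, hp1, p2, hp2, hs⟩, _, hc1, hc2, hc3, hc4⟩ := ih
    refine ⟨⟨p, hp, p1, hp1, p2, hp2, hs⟩, h, hc1, hc2, ?_, hc4⟩
    simp [insertQ5]
  | q10Closure x hx q hq h ih =>
    obtain ⟨⟨p, hp, p1, hp1, p2, hp2, hs⟩, _, hc1, hc2, hc3, hc4⟩ := ih
    refine ⟨⟨p, hp, p1, Finset.mem_insert_of_mem hp1, p2,
      Finset.mem_insert_of_mem hp2, hs⟩, h, hc1, hc2, hc3, ?_⟩
    simp [insertQ10]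

end ChargeSpectrum

open ChargeSpectrum in
/-- within the bounded class, membership in `V(S5, S10)` is equivalent to
allowing the top Yukawa, not being pheno-constrained, and being complete. -/
theorem mem_V_iff (S5 S10 : Finset ℤ) :
    ∀ x ∈ ofFinset S5 S10,
      MemV S5 S10 x ↔
        AllowsTopYukawa x ∧ ¬ IsPhenoConstrained x ∧ IsComplete x := by
  intro x hx
  constructor
  · intro h
    exact memV_forward h
  · rintro ⟨hall, hnp, hcomp⟩
    obtain ⟨hhd, hhu, h5ne, h10ne⟩ := hcomp
    obtain ⟨q, hq, q1, hq1, q2, hq2, hsum⟩ := hall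
    obtain ⟨a, ha⟩ := Option.isSome_iff_exists.mp hhd
    obtain ⟨b, hb⟩ := Finset.nonempty_iff_ne_empty.mpr h5ne
    obtain ⟨hxd, hxu, hx5, hx10⟩ := mem_ofFinset.mp hx
    -- the minimal top-Yukawa witness
    have hwmem : (⟨none, some q, ∅, {q1, q2}⟩ : ChargeSpectrum) ∈ ofFinset S5 S10 := by
      rw [mem_ofFinset]
      refine ⟨by simp, ?_, by simp, ?_⟩
      · intro c hc
        have : q = c := by simpa using hc
        rw [← this]
        exact hxu q hq
      · intro c hc
        simp only [Finset.mem_insert, Finset.mem_singleton] at hc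
        rcases hc with rfl | rfl
        · exact hx10 hq1
        · exact hx10 hq2
    have hwmin : MinimallyAllowsTopYukawa (⟨none, some q, ∅, {q1, q2}⟩ : ChargeSpectrum) := by
      constructor
      · exact ⟨q, rfl, q1, by simp, q2, by simp, hsum⟩
      · rintro ⟨yd, yu, Y5, Y10⟩ ⟨s1, s2, s3, s4⟩ hne ⟨p, hp, p1, hp1, p2, hp2, hps⟩
        simp only at hp
        subst hp
        have hyd : yd = none := by
          cases yd with
          | none => rfl
          | some c => simpa using s1 (Option.mem_toFinset.mpr rfl)
        have hq' : p = q := by simpa using s2 (Option.mem_toFinset.mpr rfl)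
        have hY5 : Y5 = ∅ := Finset.subset_empty.mp s3
        subst hq' hyd hY5
        have hY10 : Y10 ≠ ({q1, q2} : Finset ℤ) := fun hc => hne (by rw [hc])
        have s4' : Y10 ⊆ ({q1, q2} : Finset ℤ) := s4
        have hm1 := s4' hp1
        have hm2 := s4' hp2
        simp only [Finset.mem_insert, Finset.mem_singleton] at hm1 hm2
        have hq1m : q1 ∈ Y10 := by
          rcases hm1 with h | h
          · rw [← h]; exact hp1
          · rcases hm2 with h2 | h2
            · rw [← h2]; exact hp2
            · have : q1 = p1 := by omega
              rw [this]; exact hp1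
        have hq2m : q2 ∈ Y10 := by
          rcases hm2 with h | h
          · rcases hm1 with h2 | h2
            · have : q2 = p1 := by omega
              rw [this]; exact hp1
            · rw [← h2]; exact hp1
          · rw [← h]; exact hp2
        refine hY10 (Finset.Subset.antisymm s4' ?_)
        intro z hz
        rcases Finset.mem_insert.mp hz with rfl | hz
        · exact hq1m
        · rw [Finset.mem_singleton] at hz
          subst hz
          exact hq2m
    -- seed step
    have hbS5 : b ∈ S5 := hx5 hb
    have haS5 : a ∈ S5 := hxd a ha
    have hsubc : (⟨some a, (some q : Option ℤ), {b}, ({q1, q2} : Finset ℤ)⟩ : ChargeSpectrum) ⊆ x := by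
      refine ⟨?_, ?_, ?_, ?_⟩
      · simp [ha]
      · simp [hq]
      · simpa using hb
      · intro z hz
        simp only [Finset.mem_insert, Finset.mem_singleton] at hz
        rcases hz with rfl | rfl
        · exact hq1
        · exact hq2
    have hcnp : ¬ IsPhenoConstrained (⟨some a, (some q : Option ℤ), {b}, ({q1, q2} : Finset ℤ)⟩ : ChargeSpectrum) :=
      fun hc => hnp (pheno_mono hsubc hc)
    have hseed : MemV S5 S10 ⟨some a, some q, {b}, {q1, q2}⟩ :=
      MemV.seed _ hwmem hwmin a b haS5 hbS5 hcnp
    -- grow Q5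
    have h5 : ({b} : Finset ℤ) ∪ x.Q5 = x.Q5 :=
      Finset.union_eq_right.mpr (by simpa using hb)
    have hsub2 : (⟨some a, some q, x.Q5, {q1, q2}⟩ : ChargeSpectrum) ⊆ x := by
      refine ⟨by simp [ha], by simp [hq], Finset.Subset.refl _, ?_⟩
      intro z hz
      rcases Finset.mem_insert.mp hz with rfl | hz
      · exact hq1
      · rw [Finset.mem_singleton] at hz; subst hz; exact hq2
    have hstep2 : MemV S5 S10 ⟨some a, some q, x.Q5, {q1, q2}⟩ := by
      have := grow5 hseed x.Q5 hx5
        (by rw [h5]; exact fun hc => hnp (pheno_mono hsub2 hc))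
      rwa [h5] at this
    -- grow Q10
    have h10 : ({q1, q2} : Finset ℤ) ∪ x.Q10 = x.Q10 := by
      refine Finset.union_eq_right.mpr ?_
      intro z hz
      rcases Finset.mem_insert.mp hz with rfl | hz
      · exact hq1
      · rw [Finset.mem_singleton] at hz; subst hz; exact hq2
    have hxeq : x = ⟨some a, some q, x.Q5, x.Q10⟩ := by
      refine ext' ha ?_ rfl rfl
      rw [Option.isSome_iff_exists] at hhu
      exact hq
    have := grow10 hstep2 x.Q10 hx10
      (by rw [h10, ← hxeq]; exact hnp)
    rw [h10, ← hxeq] at this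
    exact this
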